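/- Under the isomorphism φ: C(kΓ) → R(Γ) of the previous statement, the standard bilinear form on class functions satisfies ⟨φ(α), φ(β)⟩ = tr(α ⋄ β) for all α, β ∈ C(kΓ), where ⟨f,g⟩ = (1/|Γ|)∑_{y∈Γ} f(y)g(y^{-1}). -/

import Mathlib

/-!
Put `A = ∑_g g⁻¹ a g` and `B = ∑_g g⁻¹ b g`. Cyclicity of `tr` gives `tr(a ⋄ b) = tr(A b)`, hence
`φ(a)(z) = A(z⁻¹)` and `∑_y φ(a)(y) φ(b)(y⁻¹) = tr(A B)`. Since `A` is central, each of the `|Γ|`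
terms of `tr(A B) = ∑_g tr(A g⁻¹ b g) = ∑_g tr(g A g⁻¹ b)` equals `tr(A b)`.
-/

open MonoidAlgebra

namespace MonoidAlgebra

variable {k Γ : Type*} [CommSemiring k] [Group Γ] [Fintype Γ]

theorem coeff_mul_one (c d : MonoidAlgebra k Γ) :
    (c * d).coeff 1 = ∑ x : Γ, c.coeff x * d.coeff x⁻¹ := by
  rw [coeff_mul_apply_left, Finsupp.sum_fintype _ _ (by simp)]
  simp only [mul_one]

theorem coeff_mul_one_comm (c d : MonoidAlgebra k Γ) : (c * d).coeff 1 = (d * c).coeff 1 := by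
  rw [coeff_mul_one, coeff_mul_one, ← Equiv.sum_comp (Equiv.inv Γ)]
  simp only [Equiv.inv_apply, inv_inv, mul_comm]

noncomputable def conjSum (a : MonoidAlgebra k Γ) : MonoidAlgebra k Γ :=
  ∑ g : Γ, single g⁻¹ 1 * a * single g 1

theorem single_mul_conjSum (a : MonoidAlgebra k Γ) (g : Γ) :
    single g 1 * conjSum a = conjSum a * single g 1 := by
  rw [conjSum, Finset.mul_sum, Finset.sum_mul, ← Equiv.sum_comp (Equiv.mulRight g)]
  refine Finset.sum_congr rfl fun h _ => ?_
  simp only [Equiv.coe_mulRight, single_mul_single, mul_one, ← mul_assoc]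
  simp [mul_assoc]

noncomputable def diamond (a b : MonoidAlgebra k Γ) : MonoidAlgebra k Γ :=
  ∑ g : Γ, a * single g 1 * b * single g⁻¹ 1

theorem coeff_one_diamond (a b : MonoidAlgebra k Γ) :
    (diamond a b).coeff 1 = (conjSum a * b).coeff 1 := by
  rw [diamond, conjSum, Finset.sum_mul, coeff_sum, coeff_sum, Finsupp.finsetSum_apply,
    Finsupp.finsetSum_apply]
  refine Finset.sum_congr rfl fun g _ => ?_
  rw [coeff_mul_one_comm]
  simp only [mul_assoc]

theorem coeff_one_mul_conjSum {c : MonoidAlgebra k Γ}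
    (hc : ∀ g : Γ, single g 1 * c = c * single g 1) (b : MonoidAlgebra k Γ) :
    (c * conjSum b).coeff 1 = Fintype.card Γ • (c * b).coeff 1 := by
  rw [conjSum, Finset.mul_sum, coeff_sum, Finsupp.finsetSum_apply, ← Finset.card_univ,
    ← Finset.sum_const]
  refine Finset.sum_congr rfl fun g _ => ?_
  calc (c * (single g⁻¹ 1 * b * single g 1)).coeff 1
      = (single g 1 * c * single g⁻¹ 1 * b).coeff 1 := by
        rw [← mul_assoc, coeff_mul_one_comm]; simp only [mul_assoc]
    _ = (c * b).coeff 1 := by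
        rw [hc, mul_assoc c, single_mul_single, mul_inv_cancel, mul_one, ← one_def, mul_one]

theorem coeff_one_diamond_single (a : MonoidAlgebra k Γ) (z : Γ) :
    (diamond a (single z 1)).coeff 1 = (conjSum a).coeff z⁻¹ := by
  rw [coeff_one_diamond, coeff_mul_single_apply, one_mul, mul_one]

end MonoidAlgebra

theorem stmt14_general {k Γ : Type*} [Field k] [CharZero k] [Group Γ] [Fintype Γ]
    (diam : MonoidAlgebra k Γ → MonoidAlgebra k Γ → MonoidAlgebra k Γ)
    (hdiam : ∀ a b, diam a b = ∑ g : Γ, a * single g 1 * b * single g⁻¹ 1)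
    (Φ : MonoidAlgebra k Γ → Γ → k)
    (hΦ : ∀ a z, Φ a z = (diam a (single z 1)).coeff 1)
    (a b : MonoidAlgebra k Γ) :
    (Fintype.card Γ : k)⁻¹ * ∑ y : Γ, Φ a y * Φ b y⁻¹ = (diam a b).coeff 1 := by
  obtain rfl : diam = diamond := funext₂ hdiam
  have hsum : ∑ y : Γ, Φ a y * Φ b y⁻¹ = (conjSum a * conjSum b).coeff 1 := by
    rw [coeff_mul_one, ← Equiv.sum_comp (Equiv.inv Γ)]
    simp only [hΦ, coeff_one_diamond_single, Equiv.inv_apply, inv_inv]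
  have hcard : (Fintype.card Γ : k) ≠ 0 := Nat.cast_ne_zero.2 Fintype.card_ne_zero
  rw [hsum, coeff_one_mul_conjSum (single_mul_conjSum a), nsmul_eq_mul,
    inv_mul_cancel_left₀ hcard, coeff_one_diamond]

/-- Under `φ : C(kΓ) → R(Γ)`, `φ(⟨a⟩)(z) = tr(a ⋄ z)`, the standard bilinear form on class
functions satisfies `⟨φ(α), φ(β)⟩ = tr(α ⋄ β)`, where `⟨f,g⟩ = (1/|Γ|) ∑_y f(y) g(y⁻¹)`
and `tr` is the coefficient of the identity. -/
theorem stmt14 {k Γ : Type*} [Field k] [CharZero k] [Group Γ] [Fintype Γ] [DecidableEq Γ]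
    (diam : MonoidAlgebra k Γ → MonoidAlgebra k Γ → MonoidAlgebra k Γ)
    (hdiam : ∀ a b, diam a b = ∑ g : Γ, a * single g 1 * b * single g⁻¹ 1)
    (Φ : MonoidAlgebra k Γ → Γ → k)
    (hΦ : ∀ a z, Φ a z = (diam a (single z 1)).coeff 1)
    (a b : MonoidAlgebra k Γ) :
    (Fintype.card Γ : k)⁻¹ * ∑ y : Γ, Φ a y * Φ b y⁻¹ = (diam a b).coeff 1 :=
  stmt14_general diam hdiam Φ hΦ a b
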